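/- If states q, q' of two finite iCGS satisfy the same A-formulas of ATL* under the objective imperfect-information memoryless semantics, then for every uniform strategy σ_A for A in G there exists a uniform strategy σ'_A in G' such that every successor of q' under σ'_A is related by objective A-equivalence to some successor of q under σ_A, i.e. succ(q', σ'_A) ⊆ { s' | ∃ s ∈ succ(q, σ_A), s ≡^obj_A s' }. -/

import Mathlib

/-- An imperfect-information concurrent game structure (iCGS), given as raw data;
the defining axioms are collected in `iCGS.Valid`. -/
structure iCGS (Ag AP S Act : Type) where
  init : S
  indist : Ag → S → S → Prop
  protocol : Ag → S → Set Act
  trans : S → (Ag → Act) → S → Prop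
  label : S → Set AP

namespace iCGS

variable {Ag AP S S' Act Act' : Type}

/-- The axioms of an iCGS. -/
def Valid (G : iCGS Ag AP S Act) : Prop :=
  (∀ i, Equivalence (G.indist i)) ∧
  (∀ i s, (G.protocol i s).Nonempty) ∧
  (∀ i s s', G.indist i s s' → G.protocol i s = G.protocol i s') ∧
  (∀ s a, (∃ s', G.trans s a s') ↔ ∀ i, a i ∈ G.protocol i s)

/-- Common-knowledge reachability for coalition `A`:
reflexive-transitive closure of the union of the `∼ᵢ`, `i ∈ A`. -/
def ck (G : iCGS Ag AP S Act) (A : Set Ag) : S → S → Prop :=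
  Relation.ReflTransGen (fun s s' => ∃ i ∈ A, G.indist i s s')

/-- Common-knowledge neighbourhood `C_A(q)`. -/
def CKN (G : iCGS Ag AP S Act) (A : Set Ag) (q : S) : Set S := {r | G.ck A q r}

/-- "Everybody knows" neighbourhood `E_A(q)`. -/
def EKN (G : iCGS Ag AP S Act) (A : Set Ag) (q : S) : Set S :=
  {r | ∃ i ∈ A, G.indist i q r}

/-- `σ` is a partial uniform strategy for coalition `A` with domain `Q`. -/
def IsPStrat (G : iCGS Ag AP S Act) (A : Set Ag) (Q : Set S) (σ : Ag → S → Act) : Prop :=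
  (∀ i ∈ A, ∀ s ∈ Q, σ i s ∈ G.protocol i s) ∧
  (∀ i ∈ A, ∀ s ∈ Q, ∀ t ∈ Q, G.indist i s t → σ i s = σ i t)

/-- `σ` is a (total) uniform memoryless strategy for coalition `A`. -/
def IsStrat (G : iCGS Ag AP S Act) (A : Set Ag) (σ : Ag → S → Act) : Prop :=
  G.IsPStrat A Set.univ σ

/-- Successors of `s` under joint actions compatible with `σ` on coalition `A`. -/
def succ (G : iCGS Ag AP S Act) (A : Set Ag) (σ : Ag → S → Act) (s : S) : Set S :=
  {t | ∃ a : Ag → Act, (∀ i ∈ A, a i = σ i s) ∧ G.trans s a t}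

/-- Objective outcome set of strategy `σ` at `q` (runs as infinite state sequences). -/
def OutObj (G : iCGS Ag AP S Act) (A : Set Ag) (σ : Ag → S → Act) (q : S) :
    Set (ℕ → S) :=
  {lam | lam 0 = q ∧ ∀ j, lam (j + 1) ∈ G.succ A σ (lam j)}

/-- Subjective outcome set: union of objective outcomes over states indistinguishable
from `q` for some member of the coalition. -/
def OutSubj (G : iCGS Ag AP S Act) (A : Set Ag) (σ : Ag → S → Act) (q : S) :
    Set (ℕ → S) :=
  {lam | ∃ i ∈ A, ∃ r, G.indist i q r ∧ lam ∈ G.OutObj A σ r}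

/-- Outcome set: subjective (`x = true`) or objective (`x = false`).
(For a nonempty coalition the subjective case coincides with the union of
objective outcomes over indistinguishable states, by reflexivity; for the
empty coalition it degenerates to the objective case.) -/
def Out (G : iCGS Ag AP S Act) (x : Bool) (A : Set Ag) (σ : Ag → S → Act) (q : S) :
    Set (ℕ → S) :=
  if x then G.OutObj A σ q ∪ G.OutSubj A σ q else G.OutObj A σ q

/-- `R` is a simulation for coalition `A` from `G` to `G'` (Def. of simulation):
existence of a strategy simulator over common-knowledge neighbourhoods with
(a) atom agreement, (b) epistemic back-condition, (c) strategy transfer, and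
(2) injectivity modulo common-knowledge neighbourhoods. -/
def IsSimulation (G : iCGS Ag AP S Act) (G' : iCGS Ag AP S' Act') (A : Set Ag)
    (R : S → S' → Prop) : Prop :=
  (∃ ST : Set S → Set S' → (Ag → S → Act) → (Ag → S' → Act'),
    ∀ q q', R q q' →
      (∀ σ, G.IsPStrat A (G.CKN A q) σ →
        G'.IsPStrat A (G'.CKN A q') (ST (G.CKN A q) (G'.CKN A q') σ)) ∧
      (∀ r ∈ G.CKN A q, ∀ r' ∈ G'.CKN A q', R r r' →
        ∀ σ, G.IsPStrat A (G.CKN A q) σ →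
          ∀ s' ∈ G'.succ A (ST (G.CKN A q) (G'.CKN A q') σ) r',
            ∃ s ∈ G.succ A σ r, R s s')) ∧
  (∀ q q', R q q' → G.label q = G'.label q') ∧
  (∀ q q', R q q' → ∀ i ∈ A, ∀ r', G'.indist i q' r' →
    ∃ r, G.indist i q r ∧ R r r') ∧
  (∀ q₁ q₂ q', R q₁ q' → R q₂ q' → G.CKN A q₁ = G.CKN A q₂)

/-- `R` is a bisimulation for `A` iff both `R` and its converse are `A`-simulations. -/
def IsBisimulation (G : iCGS Ag AP S Act) (G' : iCGS Ag AP S' Act') (A : Set Ag)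
    (R : S → S' → Prop) : Prop :=
  G.IsSimulation G' A R ∧ G'.IsSimulation G A (fun q' q => R q q')

end iCGS
mutual
/-- State formulas of ATL*. -/
inductive SF (AP Ag : Type) : Type where
  | atom : AP → SF AP Ag
  | neg : SF AP Ag → SF AP Ag
  | imp : SF AP Ag → SF AP Ag → SF AP Ag
  | coal : Set Ag → PF AP Ag → SF AP Ag
/-- Path formulas of ATL*. -/
inductive PF (AP Ag : Type) : Type where
  | of : SF AP Ag → PF AP Ag
  | neg : PF AP Ag → PF AP Ag
  | imp : PF AP Ag → PF AP Ag → PF AP Ag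
  | next : PF AP Ag → PF AP Ag
  | untl : PF AP Ag → PF AP Ag → PF AP Ag
end

variable {Ag AP S Act : Type}

mutual
/-- Satisfaction of ATL* state formulas; `x = true` is the subjective,
`x = false` the objective imperfect-information memoryless semantics. -/
def SSat (G : iCGS Ag AP S Act) (x : Bool) : S → SF AP Ag → Prop
  | s, .atom p => p ∈ G.label s
  | s, .neg φ => ¬ SSat G x s φ
  | s, .imp φ ψ => SSat G x s φ → SSat G x s ψ
  | s, .coal A ψ =>
      ∃ σ, G.IsStrat A σ ∧ ∀ lam ∈ G.Out x A σ s, PSat G x lam ψ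
/-- Satisfaction of ATL* path formulas on runs. -/
def PSat (G : iCGS Ag AP S Act) (x : Bool) : (ℕ → S) → PF AP Ag → Prop
  | lam, .of φ => SSat G x (lam 0) φ
  | lam, .neg ψ => ¬ PSat G x lam ψ
  | lam, .imp ψ χ => PSat G x lam ψ → PSat G x lam χ
  | lam, .next ψ => PSat G x (fun n => lam (n + 1)) ψ
  | lam, .untl ψ χ => ∃ j, PSat G x (fun n => lam (n + j)) χ ∧
      ∀ k < j, PSat G x (fun n => lam (n + k)) ψ
end

mutual
/-- `φ` is an `A`-formula: `A` is the only coalition occurring in it. -/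
def SOnly (A : Set Ag) : SF AP Ag → Prop
  | .atom _ => True
  | .neg φ => SOnly A φ
  | .imp φ ψ => SOnly A φ ∧ SOnly A ψ
  | .coal B ψ => B = A ∧ POnly A ψ
def POnly (A : Set Ag) : PF AP Ag → Prop
  | .of φ => SOnly A φ
  | .neg ψ => POnly A ψ
  | .imp ψ χ => POnly A ψ ∧ POnly A χ
  | .next ψ => POnly A ψ
  | .untl ψ χ => POnly A ψ ∧ POnly A χ
end

/-!
Both structures being finite, every state `s` of `G` has a characteristic `A`-formula `χ s`:
the conjunction of formulas separating `s` from each state of `G'` not `A`-equivalent to it.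
Then `⟨⟨A⟩⟩ X ⋁_{s ∈ succ(q, σ)} χ s` holds at `q`, witnessed by `σ`, hence at `q'`, and any
strategy witnessing it there has the required successors. Without atomic propositions there
are no formulas at all, and only the existence of uniform strategies and of successors matters.
-/

namespace iCGS.Valid

variable {G : iCGS Ag AP S Act}

-- The action is chosen as a function of the predicate `G.indist i s` alone, hence uniformly.
theorem exists_isStrat (hG : G.Valid) (A : Set Ag) : ∃ σ : Ag → S → Act, G.IsStrat A σ := by
  obtain ⟨hequiv, hne, hprot, -⟩ := hG
  let P (i : Ag) (s : S) (a : Act) : Prop := ∀ r, G.indist i s r → a ∈ G.protocol i r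
  have hP : ∀ i s, ∃ a, P i s a := fun i s =>
    (hne i s).imp fun a ha r hr => hprot i s r hr ▸ ha
  have choose_congr : ∀ {p q : Act → Prop} (hp : ∃ a, p a) (hq : ∃ a, q a),
      p = q → hp.choose = hq.choose := by
    rintro p q hp hq rfl
    rfl
  refine ⟨fun i s => (hP i s).choose,
    fun i _ s _ => (hP i s).choose_spec s ((hequiv i).refl s),
    fun i _ s _ t _ hst => choose_congr _ _ ?_⟩
  have hclass : G.indist i s = G.indist i t := funext fun r =>
    propext ⟨(hequiv i).trans ((hequiv i).symm hst), (hequiv i).trans hst⟩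
  simp only [P, hclass]

variable {A : Set Ag} {σ : Ag → S → Act}

theorem succ_nonempty (hG : G.Valid) (hσ : G.IsStrat A σ) (s : S) :
    (G.succ A σ s).Nonempty := by
  classical
  let a : Ag → Act := fun i => if i ∈ A then σ i s else (hG.2.1 i s).some
  have ha : ∀ i, a i ∈ G.protocol i s := fun i => by
    by_cases hi : i ∈ A
    · simpa [a, hi] using hσ.1 i hi s trivial
    · simpa [a, hi] using (hG.2.1 i s).some_mem
  obtain ⟨t, ht⟩ := (hG.2.2.2 s a).mpr ha
  exact ⟨t, a, fun i hi => if_pos hi, ht⟩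

theorem exists_mem_outObj_apply_one_eq (hG : G.Valid) (hσ : G.IsStrat A σ) {s t : S}
    (ht : t ∈ G.succ A σ s) : ∃ lam ∈ G.OutObj A σ s, lam 1 = t := by
  let next : S → S := fun x => (hG.succ_nonempty hσ x).some
  refine ⟨fun n => Nat.casesOn n s fun n => next^[n] t, ⟨rfl, ?_⟩, rfl⟩
  rintro (_ | j)
  · exact ht
  · simpa only [Function.iterate_succ_apply'] using (hG.succ_nonempty hσ _).some_mem

theorem sSat_coal_next_iff (hG : G.Valid) (s : S) (φ : SF AP Ag) :
    SSat G false s (.coal A (.next (.of φ))) ↔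
      ∃ σ, G.IsStrat A σ ∧ ∀ t ∈ G.succ A σ s, SSat G false t φ := by
  simp only [SSat, PSat, Out, Bool.false_eq_true, if_false]
  refine exists_congr fun σ => and_congr_right fun hσ => ⟨fun hout t ht => ?_, ?_⟩
  · obtain ⟨lam, hlam, rfl⟩ := hG.exists_mem_outObj_apply_one_eq hσ ht
    exact hout lam hlam
  · rintro hsucc lam ⟨hlam0, hlam⟩
    exact hsucc _ (hlam0 ▸ hlam 0)

end iCGS.Valid

namespace SF

variable (p : AP)

def top : SF AP Ag := .imp (.atom p) (.atom p)

def and (φ ψ : SF AP Ag) : SF AP Ag := .neg (.imp φ (.neg ψ))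

def or (φ ψ : SF AP Ag) : SF AP Ag := .imp (.neg φ) ψ

def listAnd (l : List (SF AP Ag)) : SF AP Ag := l.foldr and (top p)

def listOr (l : List (SF AP Ag)) : SF AP Ag := l.foldr or (.neg (top p))

variable {p} (G : iCGS Ag AP S Act) (x : Bool) (s : S) (A : Set Ag)

@[simp] theorem sSat_listAnd (l : List (SF AP Ag)) :
    SSat G x s (listAnd p l) ↔ ∀ φ ∈ l, SSat G x s φ := by
  induction l with
  | nil => simp [listAnd, top, SSat]
  | cons φ l ih => simp_all [listAnd, and, SSat]

@[simp] theorem sSat_listOr (l : List (SF AP Ag)) :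
    SSat G x s (listOr p l) ↔ ∃ φ ∈ l, SSat G x s φ := by
  induction l with
  | nil => simp [listOr, top, SSat]
  | cons φ l ih =>
    simp only [listOr] at ih ⊢
    simp only [List.foldr_cons, or, SSat, ih, List.exists_mem_cons_iff, or_iff_not_imp_left]

@[simp] theorem sOnly_listAnd (l : List (SF AP Ag)) :
    SOnly A (listAnd p l) ↔ ∀ φ ∈ l, SOnly A φ := by
  induction l with
  | nil => simp [listAnd, top, SOnly]
  | cons φ l ih => simp_all [listAnd, and, SOnly]

@[simp] theorem sOnly_listOr (l : List (SF AP Ag)) :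
    SOnly A (listOr p l) ↔ ∀ φ ∈ l, SOnly A φ := by
  induction l with
  | nil => simp [listOr, top, SOnly]
  | cons φ l ih => simp_all [listOr, or, SOnly]

end SF

mutual
theorem SF.false_of_isEmpty [IsEmpty AP] : SF AP Ag → False
  | .atom p => isEmptyElim p
  | .neg φ => SF.false_of_isEmpty φ
  | .imp φ _ => SF.false_of_isEmpty φ
  | .coal _ ψ => PF.false_of_isEmpty ψ
theorem PF.false_of_isEmpty [IsEmpty AP] : PF AP Ag → False
  | .of φ => SF.false_of_isEmpty φ
  | .neg ψ => PF.false_of_isEmpty ψ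
  | .imp ψ _ => PF.false_of_isEmpty ψ
  | .next ψ => PF.false_of_isEmpty ψ
  | .untl ψ _ => PF.false_of_isEmpty ψ
end

namespace iCGS

variable {S' Act' : Type}

def ObjEquiv (G : iCGS Ag AP S Act) (A : Set Ag) (G' : iCGS Ag AP S' Act') (s : S) (s' : S') :
    Prop :=
  ∀ φ : SF AP Ag, SOnly A φ → (SSat G false s φ ↔ SSat G' false s' φ)

variable {G : iCGS Ag AP S Act} {G' : iCGS Ag AP S' Act'} {A : Set Ag}

theorem objEquiv_of_isEmpty [IsEmpty AP] (s : S) (s' : S') : G.ObjEquiv A G' s s' :=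
  fun φ => (SF.false_of_isEmpty φ).elim

theorem exists_distinguishing_formula (p : AP) (s : S) (s' : S') :
    ∃ φ : SF AP Ag, SOnly A φ ∧ SSat G false s φ ∧
      (SSat G' false s' φ → G.ObjEquiv A G' s s') := by
  by_cases hs : G.ObjEquiv A G' s s'
  · exact ⟨.top p, by simp [SF.top, SOnly], by simp [SF.top, SSat], fun _ => hs⟩
  simp only [ObjEquiv, not_forall] at hs
  obtain ⟨φ, hφ, hdiff⟩ := hs
  by_cases hφs : SSat G false s φ
  · exact ⟨φ, hφ, hφs, fun hφs' => (hdiff (iff_of_true hφs hφs')).elim⟩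
  · exact ⟨.neg φ, hφ, hφs, fun hφs' => (hdiff (iff_of_false hφs hφs')).elim⟩

theorem exists_characteristic_formula [Fintype S'] (p : AP) (s : S) :
    ∃ φ : SF AP Ag, SOnly A φ ∧ SSat G false s φ ∧
      ∀ s', SSat G' false s' φ → G.ObjEquiv A G' s s' := by
  choose δ hδA hδs hδ using exists_distinguishing_formula (G := G) (G' := G') (A := A) p s
  refine ⟨.listAnd p (Finset.univ.toList.map δ), ?_, ?_, fun s' hs' => hδ s' ?_⟩ <;>
    simp_all

end iCGS

/-- if `q` and `q'` satisfy the same `A`-formulas of ATL* under the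
objective semantics (finite models), then for every uniform strategy `σ` of `A` in
`G` there is a uniform strategy `σ'` in `G'` such that every successor of `q'` under
`σ'` is objectively `A`-equivalent to some successor of `q` under `σ`. -/
theorem objective_equivalence_successor_condition
    {Ag AP S S' Act Act' : Type} [Fintype S] [Fintype S'] [Fintype Act] [Fintype Act']
    (G : iCGS Ag AP S Act) (G' : iCGS Ag AP S' Act')
    (hG : G.Valid) (hG' : G'.Valid) (A : Set Ag) (q : S) (q' : S')
    (h : ∀ φ : SF AP Ag, SOnly A φ → (SSat G false q φ ↔ SSat G' false q' φ))
    (σ : Ag → S → Act) (hσ : G.IsStrat A σ) :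
    ∃ σ' : Ag → S' → Act', G'.IsStrat A σ' ∧
      G'.succ A σ' q' ⊆
        {s' | ∃ s ∈ G.succ A σ q,
          ∀ φ : SF AP Ag, SOnly A φ → (SSat G false s φ ↔ SSat G' false s' φ)} := by
  classical
  rcases isEmpty_or_nonempty AP with _ | ⟨⟨p⟩⟩
  · obtain ⟨σ', hσ'⟩ := hG'.exists_isStrat A
    obtain ⟨s, hs⟩ := hG.succ_nonempty hσ q
    exact ⟨σ', hσ', fun _ _ => ⟨s, hs, iCGS.objEquiv_of_isEmpty _ _⟩⟩
  · choose χ hχA hχs hχ using iCGS.exists_characteristic_formula (G := G) (G' := G') (A := A) p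
    let succχ := (G.succ A σ q).toFinset.toList.map χ
    have mem_succχ : ∀ φ, φ ∈ succχ ↔ ∃ s ∈ G.succ A σ q, χ s = φ := by simp [succχ]
    let Ψ : SF AP Ag := .listOr p succχ
    have hq : SSat G false q (.coal A (.next (.of Ψ))) :=
      (hG.sSat_coal_next_iff q Ψ).mpr ⟨σ, hσ, fun t ht =>
        (SF.sSat_listOr ..).mpr ⟨χ t, (mem_succχ _).mpr ⟨t, ht, rfl⟩, hχs t⟩⟩
    have hΨA : SOnly A (.coal A (.next (.of Ψ))) :=
      ⟨rfl, (SF.sOnly_listOr ..).mpr fun φ hφ => by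
        obtain ⟨s, -, rfl⟩ := (mem_succχ φ).mp hφ
        exact hχA s⟩
    obtain ⟨σ', hσ', hΨ⟩ := (hG'.sSat_coal_next_iff q' Ψ).mp ((h _ hΨA).mp hq)
    refine ⟨σ', hσ', fun t' ht' => ?_⟩
    obtain ⟨_, hmem, hsat⟩ := (SF.sSat_listOr ..).mp (hΨ t' ht')
    obtain ⟨s, hs, rfl⟩ := (mem_succχ _).mp hmem
    exact ⟨s, hs, hχ s t' hsat⟩
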